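/- (Proposition 5.1.) Let Ω ⊆ ℝ^n be open, a ∈ (-1,1), λ > 0, and let u be a solution of the extension form of the fractional plasma equation on Ω satisfying in addition ∂_y u(x,y) ≤ 0 for all (x,y) ∈ Ω × (0,∞). Then the topological boundary, relative to Ω, of the set {x ∈ Ω : u(x,0) < 0} is contained in the topological boundary, relative to Ω, of the set {x ∈ Ω : u(x,0) > 0}. -/

import Mathlib

open MeasureTheory Filter Set Metric
open scoped RealInnerProductSpace NNReal ENNReal

noncomputable section

/-- `ℝⁿ` as a Euclidean space. -/
abbrev Rn (n : ℕ) := EuclideanSpace ℝ (Fin n)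

/-- The point `(x, t) ∈ ℝⁿ × ℝ = ℝ^{n+1}`. -/
def emb {n : ℕ} (x : Rn n) (t : ℝ) : Rn (n + 1) :=
  WithLp.toLp 2 (Fin.snoc (α := fun _ => ℝ) (WithLp.ofLp x) t)

/-- The horizontal part `x` of a point `z = (x,y) ∈ ℝ^{n+1}`. -/
def xpart {n : ℕ} (z : Rn (n + 1)) : Rn n := WithLp.toLp 2 (fun i : Fin n => z i.castSucc)

/-- The last (vertical) coordinate `y` of a point `z = (x,y) ∈ ℝ^{n+1}`. -/
def ycoord {n : ℕ} (z : Rn (n + 1)) : ℝ := z (Fin.last n)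

/-- The partial derivative `∂_y f` in the last coordinate. -/
def pdy {n : ℕ} (f : Rn (n + 1) → ℝ) (z : Rn (n + 1)) : ℝ :=
  fderiv ℝ f z (EuclideanSpace.single (Fin.last n) 1)

/-- The Laplacian `Δf = ∑ ∂²f/∂x_i²` on `ℝᵐ`. -/
def lap {m : ℕ} (f : Rn m → ℝ) (z : Rn m) : ℝ :=
  ∑ i : Fin m, fderiv ℝ (fun w => fderiv ℝ f w (EuclideanSpace.single i 1)) z
    (EuclideanSpace.single i 1)

/-- The upper half-ball `B_r⁺ = B_r ∩ {y > 0} ⊂ ℝ^{n+1}`. -/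
def Bplus (n : ℕ) (r : ℝ) : Set (Rn (n + 1)) := {z | ‖z‖ < r ∧ 0 < ycoord z}

/-- The upper hemisphere `(∂B_r)⁺ = ∂B_r ∩ {y > 0} ⊂ ℝ^{n+1}`. -/
def Splus (n : ℕ) (r : ℝ) : Set (Rn (n + 1)) := {z | ‖z‖ = r ∧ 0 < ycoord z}

/-- The thin ball `B'_r × {0} ⊂ ℝ^{n+1}`. -/
def Thin (n : ℕ) (r : ℝ) : Set (Rn (n + 1)) := {z | ‖xpart z‖ < r ∧ ycoord z = 0}

/-- `v` is `C²` and `a`-harmonic (`div(|y|^a ∇v) = 0`, equivalently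
`|y|·Δv + a·sign(y)·∂_y v = 0`) on a set `U ⊆ {y ≠ 0}`. -/
def AHarmonicOn {n : ℕ} (a : ℝ) (v : Rn (n + 1) → ℝ) (U : Set (Rn (n + 1))) : Prop :=
  ContDiffOn ℝ 2 v U ∧
    ∀ z ∈ U, |ycoord z| * lap v z + a * Real.sign (ycoord z) * pdy v z = 0

/-- A solution of the extension form of the fractional plasma equation on an open set
`D ⊆ ℝⁿ`: `u` is continuous on `D × [0,∞)`, `C²` and `a`-harmonic on `D × (0,∞)`, and
`y^a ∂_y u(x,y) → -λ·u₊(x,0)` as `y → 0⁺`, locally uniformly in `x ∈ D`. -/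
def ExtSol {n : ℕ} (a lam : ℝ) (D : Set (Rn n)) (u : Rn (n + 1) → ℝ) : Prop :=
  ContinuousOn u {z | xpart z ∈ D ∧ 0 ≤ ycoord z} ∧
  AHarmonicOn a u {z | xpart z ∈ D ∧ 0 < ycoord z} ∧
  TendstoLocallyUniformlyOn (fun y x => y ^ a * pdy u (emb x y))
    (fun x => -lam * max (u (emb x 0)) 0) (nhdsWithin 0 (Set.Ioi 0)) D

/-- The horizontal gradient `∇ₓ f = (∂f/∂x_1, …, ∂f/∂x_n)` of `f : ℝ^{n+1} → ℝ`. -/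
def gradX {n : ℕ} (f : Rn (n + 1) → ℝ) (z : Rn (n + 1)) : Rn n :=
  WithLp.toLp 2 (fun i : Fin n => fderiv ℝ f z (EuclideanSpace.single i.castSucc 1))

/-- The outward radial derivative `∂_ν f(z) = ⟨∇f(z), z/‖z‖⟩`. -/
def rder {n : ℕ} (f : Rn (n + 1) → ℝ) (z : Rn (n + 1)) : ℝ :=
  fderiv ℝ f z (‖z‖⁻¹ • z)

/-!
Let `x₀ ∈ Ω` lie on the boundary of `{u(·,0) < 0}`, so `u(x₀,0) = 0`. If `x₀` were not in the
closure of `{u(·,0) > 0}`, the trace would be `≤ 0` near `x₀`, and we could pick `x₁` close to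
`x₀` with `u(x₁,0) < 0`. With `p = (x₁,0)` and `ρ < |x₀ - x₁| < R`, compare `u` on the upper
half-annulus `ρ ≤ |z - p| ≤ R, y ≥ 0` with the Hopf barrier `c |z - p| ^ (-(n+1))`, on which
`y Δ + a ∂_y` is positive. After adding `ε y ^ (1 - a)`, which is `a`-harmonic with
`y ^ a ∂_y (y ^ (1 - a)) = 1 - a`, the sum has no maximum inside (the operator is positive there)
and none on `{y = 0}` (there `y ^ a ∂_y → ε (1 - a) > 0`, as the Neumann datum `-λ u₊` vanishes
where `u ≤ 0`). So it is largest on the two spheres, where `∂_y u ≤ 0` bounds `u` by its trace.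
Letting `ε → 0` gives `u + c |z - p| ^ (-(n+1)) ≤ c R ^ (-(n+1))` on the half-annulus, which fails
at `(x₀,0)`.
-/

open Topology

lemma deriv_deriv_nonpos_of_isLocalMax {g : ℝ → ℝ} {t : ℝ} (h : IsLocalMax g t)
    (hg : ContinuousAt g t) : deriv (deriv g) t ≤ 0 := by
  by_contra! hpos
  -- the second-derivative test would make `t` also a local minimum, so `g` is locally constant
  have hconst : g =ᶠ[𝓝 t] fun _ => g t :=
    ((isLocalMin_of_deriv_deriv_pos hpos h.deriv_eq_zero hg).and h).mono
      fun s hs => le_antisymm hs.2 hs.1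
  exact hpos.ne' (by simpa using hconst.deriv.deriv_eq)

lemma eventually_lt_of_hasDerivAt_pos {g g' : ℝ → ℝ} {t : ℝ}
    (hc : ContinuousWithinAt g (Ici t) t)
    (hd : ∀ᶠ s in 𝓝[>] t, HasDerivAt g (g' s) s ∧ 0 < g' s) :
    ∀ᶠ s in 𝓝[>] t, g t < g s := by
  obtain ⟨u, hu, hIoo⟩ := mem_nhdsGT_iff_exists_Ioo_subset.1 hd
  filter_upwards [Ioo_mem_nhdsGT hu] with s hs
  have hcont : ContinuousOn g (Icc t s) := fun x hx => by
    rcases hx.1.eq_or_lt with rfl | hxt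
    · exact hc.mono Icc_subset_Ici_self
    · exact (hIoo ⟨hxt, hx.2.trans_lt hs.2⟩).1.continuousAt.continuousWithinAt
  obtain ⟨x, hx, hslope⟩ := exists_hasDerivAt_eq_slope g g' hs.1 hcont
    fun x hx => (hIoo ⟨hx.1, hx.2.trans hs.2⟩).1
  have hpos := (hIoo ⟨hx.1, hx.2.trans hs.2⟩).2
  rw [hslope] at hpos
  linarith [(div_pos_iff_of_pos_right (sub_pos.2 hs.1)).1 hpos]

lemma exists_ball_subset_nonpos_of_notMem_closure {X : Type*} [PseudoMetricSpace X]
    {Ω : Set X} {f : X → ℝ} {x₀ : X} (hΩ : IsOpen Ω) (hx₀ : x₀ ∈ Ω)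
    (h : x₀ ∉ closure {x ∈ Ω | 0 < f x}) :
    ∃ δ > 0, ball x₀ δ ⊆ Ω ∧ ∀ x ∈ ball x₀ δ, f x ≤ 0 := by
  obtain ⟨δ, hδ, hball⟩ := Metric.isOpen_iff.1 (hΩ.sdiff isClosed_closure) x₀ ⟨hx₀, h⟩
  exact ⟨δ, hδ, fun x hx => (hball hx).1, fun x hx =>
    not_lt.1 fun hpos => (hball hx).2 (subset_closure ⟨(hball hx).1, hpos⟩)⟩

section SecondDerivative

variable {E : Type*} [NormedAddCommGroup E] [NormedSpace ℝ E] {f : E → ℝ} {z : E}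

lemma ContDiffAt.eventually_differentiableAt (hf : ContDiffAt ℝ 2 f z) :
    ∀ᶠ w in 𝓝 z, DifferentiableAt ℝ f w :=
  (hf.eventually (by simp)).mono fun _ hw => hw.differentiableAt (by norm_num)

lemma ContDiffAt.differentiableAt_fderiv_apply (hf : ContDiffAt ℝ 2 f z) (e : E) :
    DifferentiableAt ℝ (fun w => fderiv ℝ f w e) z :=
  ((hf.fderiv_right (m := 1) (by norm_num)).differentiableAt one_ne_zero).clm_apply
    (differentiableAt_const e)

lemma fderiv_fderiv_apply_nonpos_of_isLocalMax (hf : ContDiffAt ℝ 2 f z)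
    (h : IsLocalMax f z) (e : E) : fderiv ℝ (fun w => fderiv ℝ f w e) z e ≤ 0 := by
  set γ : ℝ → E := fun t => z + t • e
  have hγ : ∀ t, HasDerivAt γ e t := fun t => by
    simpa [γ] using ((hasDerivAt_id t).smul_const e).const_add z
  have hγ0 : γ 0 = z := by simp [γ]
  have hγlim : Tendsto γ (𝓝 0) (𝓝 z) := hγ0 ▸ (hγ 0).continuousAt.tendsto
  have hderiv : deriv (f ∘ γ) =ᶠ[𝓝 0] fun t => fderiv ℝ f (γ t) e := by
    filter_upwards [hγlim.eventually hf.eventually_differentiableAt] with t ht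
    exact (ht.hasFDerivAt.comp_hasDerivAt t (hγ t)).deriv
  have hsecond : deriv (deriv (f ∘ γ)) 0 = fderiv ℝ (fun w => fderiv ℝ f w e) z e := by
    rw [hderiv.deriv_eq]
    refine HasDerivAt.deriv ?_
    have hF : HasFDerivAt (fun w => fderiv ℝ f w e)
        (fderiv ℝ (fun w => fderiv ℝ f w e) z) (γ 0) := by
      rw [hγ0]; exact (hf.differentiableAt_fderiv_apply e).hasFDerivAt
    exact hF.comp_hasDerivAt 0 (hγ 0)
  rw [← hsecond]
  refine deriv_deriv_nonpos_of_isLocalMax ?_ ?_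
  · exact (hγ0 ▸ h).comp_continuous (hγ 0).continuousAt
  · exact (hγ0 ▸ hf.continuousAt).comp (hγ 0).continuousAt

lemma fderiv_fderiv_apply_add {g : E → ℝ} (hf : ContDiffAt ℝ 2 f z) (hg : ContDiffAt ℝ 2 g z)
    (e e' : E) :
    fderiv ℝ (fun w => fderiv ℝ (fun w => f w + g w) w e) z e'
      = fderiv ℝ (fun w => fderiv ℝ f w e) z e' + fderiv ℝ (fun w => fderiv ℝ g w e) z e' := by
  have h : (fun w => fderiv ℝ (fun w => f w + g w) w e)
      =ᶠ[𝓝 z] fun w => fderiv ℝ f w e + fderiv ℝ g w e := by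
    filter_upwards [hf.eventually_differentiableAt, hg.eventually_differentiableAt]
      with w hfw hgw
    rw [fderiv_fun_add hfw hgw, add_apply]
  rw [h.fderiv_eq, fderiv_fun_add (hf.differentiableAt_fderiv_apply e)
    (hg.differentiableAt_fderiv_apply e), add_apply]

lemma fderiv_fderiv_apply_const_mul (hf : ContDiffAt ℝ 2 f z) (c : ℝ) (e e' : E) :
    fderiv ℝ (fun w => fderiv ℝ (fun w => c * f w) w e) z e'
      = c * fderiv ℝ (fun w => fderiv ℝ f w e) z e' := by
  have h : (fun w => fderiv ℝ (fun w => c * f w) w e) =ᶠ[𝓝 z] fun w => c * fderiv ℝ f w e := by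
    filter_upwards [hf.eventually_differentiableAt] with w hfw
    rw [fderiv_const_mul hfw, smul_apply, smul_eq_mul]
  rw [h.fderiv_eq, fderiv_const_mul (hf.differentiableAt_fderiv_apply e),
    smul_apply, smul_eq_mul]

end SecondDerivative

section RadialPower

variable {F : Type*} [NormedAddCommGroup F] [InnerProductSpace ℝ F] {p z : F}

lemma hasFDerivAt_rpow_normSq_sub (hz : z ≠ p) (r : ℝ) :
    HasFDerivAt (fun w => (‖w - p‖ ^ 2) ^ r)
      ((r * (‖z - p‖ ^ 2) ^ (r - 1) * 2) • innerSL ℝ (z - p)) z := by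
  have hq : ‖z - p‖ ^ 2 ≠ 0 := by simpa [sub_eq_zero] using hz
  refine ((Real.hasDerivAt_rpow_const (p := r) (Or.inl hq)).comp_hasFDerivAt z
    ((hasFDerivAt_id z).sub_const p).norm_sq).congr_fderiv ?_
  ext e
  simp only [smul_apply, ContinuousLinearMap.comp_id, id_eq, smul_eq_mul, nsmul_eq_mul]
  ring

lemma fderiv_rpow_normSq_sub_apply (hz : z ≠ p) (r : ℝ) (e : F) :
    fderiv ℝ (fun w => (‖w - p‖ ^ 2) ^ r) z e
      = r * (‖z - p‖ ^ 2) ^ (r - 1) * 2 * ⟪z - p, e⟫ := by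
  simp [(hasFDerivAt_rpow_normSq_sub hz r).fderiv, mul_assoc, inner_sub_left]

lemma fderiv_fderiv_rpow_normSq_sub_apply (hz : z ≠ p) (r : ℝ) (e : F) :
    fderiv ℝ (fun w => fderiv ℝ (fun w => (‖w - p‖ ^ 2) ^ r) w e) z e
      = r * 2 * ((r - 1) * (‖z - p‖ ^ 2) ^ (r - 2) * 2 * ⟪z - p, e⟫ ^ 2
          + (‖z - p‖ ^ 2) ^ (r - 1) * ‖e‖ ^ 2) := by
  have hfirst : (fun w => fderiv ℝ (fun w => (‖w - p‖ ^ 2) ^ r) w e)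
      =ᶠ[𝓝 z] fun w => r * 2 * ((‖w - p‖ ^ 2) ^ (r - 1) * ⟪e, w - p⟫) := by
    filter_upwards [isOpen_ne.mem_nhds hz] with w hw
    rw [fderiv_rpow_normSq_sub_apply hw, real_inner_comm]
    ring
  have hinner : HasFDerivAt (fun w => ⟪e, w - p⟫) (innerSL ℝ e) z :=
    (innerSL ℝ e).hasFDerivAt.comp z ((hasFDerivAt_id z).sub_const p)
  rw [hfirst.fderiv_eq, (((hasFDerivAt_rpow_normSq_sub hz (r - 1)).fun_mul hinner).const_mul
    (r * 2)).fderiv]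
  simp only [smul_apply, add_apply, innerSL_apply_apply, smul_eq_mul, real_inner_self_eq_norm_sq,
    real_inner_comm e, show r - 1 - 1 = r - 2 by ring]
  ring

lemma contDiffAt_rpow_normSq_sub (hz : z ≠ p) (r : ℝ) :
    ContDiffAt ℝ 2 (fun w => (‖w - p‖ ^ 2) ^ r) z :=
  (Real.contDiffAt_rpow_const_of_ne (by simpa [sub_eq_zero] using hz)).comp z
    ((contDiffAt_id.sub contDiffAt_const).norm_sq ℝ)

end RadialPower

section Coordinates

variable {n : ℕ}

@[simp] lemma xpart_emb (x : Rn n) (t : ℝ) : xpart (emb x t) = x := by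
  ext i; simp [xpart, emb]

@[simp] lemma ycoord_emb (x : Rn n) (t : ℝ) : ycoord (emb x t) = t := by
  simp [ycoord, emb]

lemma emb_xpart_ycoord (z : Rn (n + 1)) : emb (xpart z) (ycoord z) = z := by
  ext i
  induction i using Fin.lastCases <;> simp [emb, xpart, ycoord]

lemma emb_sub_emb (x x' : Rn n) (s t : ℝ) : emb x s - emb x' t = emb (x - x') (s - t) := by
  ext i
  induction i using Fin.lastCases <;> simp [emb]

lemma emb_eq_add (x : Rn n) (t : ℝ) :
    emb x t = emb x 0 + t • EuclideanSpace.single (Fin.last n) 1 := by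
  ext i
  induction i using Fin.lastCases <;> simp [emb, (Fin.castSucc_lt_last _).ne]

lemma continuous_emb (x : Rn n) : Continuous (emb x) := by
  unfold emb; fun_prop

lemma continuous_emb_zero : Continuous fun x : Rn n => emb x 0 := by
  unfold emb; fun_prop

lemma hasDerivAt_emb (x : Rn n) (t : ℝ) :
    HasDerivAt (emb x) (EuclideanSpace.single (Fin.last n) 1) t := by
  rw [show emb x = fun s => emb x 0 + s • EuclideanSpace.single (Fin.last n) 1 from
    funext (emb_eq_add x)]
  simpa using ((hasDerivAt_id t).smul_const _).const_add (emb x 0)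

lemma continuous_xpart : Continuous (xpart (n := n)) := by
  unfold xpart; fun_prop

lemma continuous_ycoord : Continuous (ycoord (n := n)) := by
  unfold ycoord; fun_prop

@[simp] lemma xpart_sub (z w : Rn (n + 1)) : xpart (z - w) = xpart z - xpart w := by
  ext i; simp [xpart]

@[simp] lemma ycoord_sub (z w : Rn (n + 1)) : ycoord (z - w) = ycoord z - ycoord w := by
  simp [ycoord]

lemma norm_sq_eq_xpart_ycoord (z : Rn (n + 1)) : ‖z‖ ^ 2 = ‖xpart z‖ ^ 2 + ycoord z ^ 2 := by
  simp [EuclideanSpace.norm_sq_eq, Fin.sum_univ_castSucc, xpart, ycoord]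

lemma norm_emb_sq (x : Rn n) (t : ℝ) : ‖emb x t‖ ^ 2 = ‖x‖ ^ 2 + t ^ 2 := by
  simpa using norm_sq_eq_xpart_ycoord (emb x t)

lemma norm_emb_zero (x : Rn n) : ‖emb x 0‖ = ‖x‖ :=
  (sq_eq_sq₀ (norm_nonneg _) (norm_nonneg _)).1 (by simpa using norm_emb_sq x 0)

lemma norm_xpart_le (z : Rn (n + 1)) : ‖xpart z‖ ≤ ‖z‖ := by
  nlinarith [norm_sq_eq_xpart_ycoord z, norm_nonneg z, norm_nonneg (xpart z)]

lemma ne_of_ycoord_ne {p z : Rn (n + 1)} (hp : ycoord p = 0) (hz : ycoord z ≠ 0) : z ≠ p :=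
  fun h => hz (h ▸ hp)

lemma ycoord_le_norm (z : Rn (n + 1)) : ycoord z ≤ ‖z‖ := by
  nlinarith [norm_sq_eq_xpart_ycoord z, sq_nonneg ‖xpart z‖, norm_nonneg z]

end Coordinates

section Laplacian

variable {m : ℕ} {f g : Rn m → ℝ} {z : Rn m}

lemma lap_add (hf : ContDiffAt ℝ 2 f z) (hg : ContDiffAt ℝ 2 g z) :
    lap (fun w => f w + g w) z = lap f z + lap g z := by
  simp only [lap, fderiv_fderiv_apply_add hf hg, Finset.sum_add_distrib]

lemma lap_const_mul (hf : ContDiffAt ℝ 2 f z) (c : ℝ) :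
    lap (fun w => c * f w) z = c * lap f z := by
  simp only [lap, fderiv_fderiv_apply_const_mul hf, Finset.mul_sum]

lemma lap_rpow_normSq_sub {p : Rn m} (hz : z ≠ p) (r : ℝ) :
    lap (fun w => (‖w - p‖ ^ 2) ^ r) z
      = 2 * r * (2 * (r - 1) + m) * (‖z - p‖ ^ 2) ^ (r - 1) := by
  have hq : 0 < ‖z - p‖ ^ 2 := pow_pos (norm_pos_iff.2 (sub_ne_zero.2 hz)) 2
  have hsum : ∑ i, (z - p) i ^ 2 = ‖z - p‖ ^ 2 := by
    simp [EuclideanSpace.norm_sq_eq]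
  have hpow : (‖z - p‖ ^ 2) ^ (r - 2) * ‖z - p‖ ^ 2 = (‖z - p‖ ^ 2) ^ (r - 1) := by
    rw [← Real.rpow_add_one hq.ne', show r - 2 + 1 = r - 1 by ring]
  simp only [lap, fderiv_fderiv_rpow_normSq_sub_apply hz, EuclideanSpace.inner_single_right,
    PiLp.norm_single, norm_one, one_mul, conj_trivial]
  rw [Finset.sum_congr rfl fun i _ => show _ = 4 * r * (r - 1) * (‖z - p‖ ^ 2) ^ (r - 2)
    * (z - p) i ^ 2 + 2 * r * (‖z - p‖ ^ 2) ^ (r - 1) by ring, Finset.sum_add_distrib,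
    ← Finset.mul_sum, hsum, Finset.sum_const, Finset.card_univ, Fintype.card_fin, nsmul_eq_mul]
  linear_combination (4 * r * (r - 1)) * hpow

end Laplacian

section HalfSpace

variable {n : ℕ}

lemma pdy_add {f g : Rn (n + 1) → ℝ} {z : Rn (n + 1)} (hf : DifferentiableAt ℝ f z)
    (hg : DifferentiableAt ℝ g z) : pdy (fun w => f w + g w) z = pdy f z + pdy g z := by
  simp only [pdy, fderiv_fun_add hf hg, add_apply]

lemma pdy_const_mul {f : Rn (n + 1) → ℝ} {z : Rn (n + 1)} (hf : DifferentiableAt ℝ f z)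
    (c : ℝ) : pdy (fun w => c * f w) z = c * pdy f z := by
  simp only [pdy, fderiv_const_mul hf, smul_apply, smul_eq_mul]

lemma pdy_rpow_normSq_sub {p z : Rn (n + 1)} (hz : z ≠ p) (r : ℝ) :
    pdy (fun w => (‖w - p‖ ^ 2) ^ r) z
      = 2 * r * (‖z - p‖ ^ 2) ^ (r - 1) * (ycoord z - ycoord p) := by
  rw [pdy, fderiv_rpow_normSq_sub_apply hz, EuclideanSpace.inner_single_right]
  simp only [ycoord, conj_trivial, one_mul, PiLp.sub_apply]
  ring

section VerticalPower

variable {z : Rn (n + 1)}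

lemma hasFDerivAt_ycoord_rpow (hy : ycoord z ≠ 0) (b : ℝ) :
    HasFDerivAt (fun w => ycoord w ^ b)
      ((b * ycoord z ^ (b - 1)) • EuclideanSpace.proj (𝕜 := ℝ) (Fin.last n)) z :=
  (Real.hasDerivAt_rpow_const (Or.inl hy)).comp_hasFDerivAt z
    (EuclideanSpace.proj (𝕜 := ℝ) (Fin.last n)).hasFDerivAt

lemma contDiffAt_ycoord_rpow (hy : ycoord z ≠ 0) (b : ℝ) :
    ContDiffAt ℝ 2 (fun w => ycoord w ^ b) z :=
  (Real.contDiffAt_rpow_const_of_ne hy).comp z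
    (EuclideanSpace.proj (𝕜 := ℝ) (Fin.last n)).contDiff.contDiffAt

lemma fderiv_ycoord_rpow_apply (hy : ycoord z ≠ 0) (b : ℝ) (e : Rn (n + 1)) :
    fderiv ℝ (fun w => ycoord w ^ b) z e = b * ycoord z ^ (b - 1) * ycoord e := by
  rw [(hasFDerivAt_ycoord_rpow hy b).fderiv]
  simp [ycoord]

lemma ycoord_single (i : Fin (n + 1)) :
    ycoord (EuclideanSpace.single i (1 : ℝ)) = if i = Fin.last n then 1 else 0 := by
  simp [ycoord, eq_comm]

lemma pdy_ycoord_rpow (hy : ycoord z ≠ 0) (b : ℝ) :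
    pdy (fun w => ycoord w ^ b) z = b * ycoord z ^ (b - 1) := by
  simp [pdy, fderiv_ycoord_rpow_apply hy, ycoord_single]

lemma lap_ycoord_rpow (hy : ycoord z ≠ 0) (b : ℝ) :
    lap (fun w => ycoord w ^ b) z = b * (b - 1) * ycoord z ^ (b - 2) := by
  have hsecond : ∀ e, fderiv ℝ (fun w => fderiv ℝ (fun w => ycoord w ^ b) w e) z e
      = b * (b - 1) * ycoord z ^ (b - 2) * ycoord e ^ 2 := fun e => by
    have hfirst : (fun w => fderiv ℝ (fun w => ycoord w ^ b) w e)
        =ᶠ[𝓝 z] fun w => b * ycoord e * ycoord w ^ (b - 1) := by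
      filter_upwards [(isOpen_ne_fun continuous_ycoord continuous_const).mem_nhds hy] with w hw
      rw [fderiv_ycoord_rpow_apply hw]
      ring
    rw [hfirst.fderiv_eq, fderiv_const_mul (hasFDerivAt_ycoord_rpow hy (b - 1)).differentiableAt,
      smul_apply, fderiv_ycoord_rpow_apply hy, smul_eq_mul, show b - 1 - 1 = b - 2 by ring]
    ring
  simp [lap, hsecond, ycoord_single]

end VerticalPower

/-- On `{y > 0}` this is `y ^ (1 - a) • div (y ^ a • ∇f)`. -/
def aLap (a : ℝ) (f : Rn (n + 1) → ℝ) (z : Rn (n + 1)) : ℝ :=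
  ycoord z * lap f z + a * pdy f z

section ALap

variable {a : ℝ} {f g : Rn (n + 1) → ℝ} {z : Rn (n + 1)}

lemma aLap_add (hf : ContDiffAt ℝ 2 f z) (hg : ContDiffAt ℝ 2 g z) :
    aLap a (fun w => f w + g w) z = aLap a f z + aLap a g z := by
  simp only [aLap, lap_add hf hg, pdy_add (hf.differentiableAt two_ne_zero)
    (hg.differentiableAt two_ne_zero)]
  ring

lemma aLap_const_mul (hf : ContDiffAt ℝ 2 f z) (c : ℝ) :
    aLap a (fun w => c * f w) z = c * aLap a f z := by
  simp only [aLap, lap_const_mul hf, pdy_const_mul (hf.differentiableAt two_ne_zero)]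
  ring

lemma aLap_nonpos_of_isLocalMax (hf : ContDiffAt ℝ 2 f z) (h : IsLocalMax f z)
    (hy : 0 ≤ ycoord z) : aLap a f z ≤ 0 := by
  have hlap : lap f z ≤ 0 :=
    Finset.sum_nonpos fun i _ => fderiv_fderiv_apply_nonpos_of_isLocalMax hf h _
  simp [aLap, pdy, h.fderiv_eq_zero, mul_nonpos_of_nonneg_of_nonpos hy hlap]

lemma AHarmonicOn.aLap_eq_zero {U : Set (Rn (n + 1))} (h : AHarmonicOn a f U) (hz : z ∈ U)
    (hy : 0 < ycoord z) : aLap a f z = 0 := by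
  simpa [aLap, abs_of_pos hy, Real.sign_of_pos hy] using h.2 z hz

lemma aLap_ycoord_rpow_one_sub (hy : 0 < ycoord z) :
    aLap a (fun w => ycoord w ^ (1 - a)) z = 0 := by
  rw [aLap, lap_ycoord_rpow hy.ne', pdy_ycoord_rpow hy.ne',
    show 1 - a - 1 = 1 - a - 2 + 1 by ring, Real.rpow_add_one hy.ne']
  ring

end ALap

/-- `|s| ^ (-(n + 1))`, written through `s ^ 2` so that `hopfBarrier` is smooth off its pole. -/
def hopfRadial (n : ℕ) (s : ℝ) : ℝ := (s ^ 2) ^ (-((n : ℝ) + 1) / 2)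

def hopfBarrier (p : Rn (n + 1)) : Rn (n + 1) → ℝ := fun z => hopfRadial n ‖z - p‖

lemma hopfRadial_lt_hopfRadial {s t : ℝ} (hs : 0 < s) (hst : s < t) :
    hopfRadial n t < hopfRadial n s :=
  Real.rpow_lt_rpow_of_neg (by positivity) (by nlinarith)
    (by linarith [(n.cast_nonneg : (0 : ℝ) ≤ n)])

lemma aLap_hopfBarrier_pos {a : ℝ} (ha : a < 2) {p z : Rn (n + 1)} (hp : ycoord p = 0)
    (hy : 0 < ycoord z) : 0 < aLap a (hopfBarrier p) z := by
  have hz : z ≠ p := ne_of_ycoord_ne hp hy.ne'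
  have hq : 0 < (‖z - p‖ ^ 2) ^ (-((n : ℝ) + 1) / 2 - 1) :=
    Real.rpow_pos_of_pos (pow_pos (norm_pos_iff.2 (sub_ne_zero.2 hz)) 2) _
  have hformula : aLap a (hopfBarrier p) z
      = (n + 1) * (2 - a) * ycoord z * (‖z - p‖ ^ 2) ^ (-((n : ℝ) + 1) / 2 - 1) := by
    unfold hopfBarrier hopfRadial
    rw [aLap, lap_rpow_normSq_sub hz, pdy_rpow_normSq_sub hz, hp]
    push_cast
    ring
  have h2a : (0 : ℝ) < 2 - a := by linarith
  rw [hformula]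
  positivity

def hopfPerturb (u : Rn (n + 1) → ℝ) (p : Rn (n + 1)) (a c ε : ℝ) : Rn (n + 1) → ℝ :=
  fun w => u w + c * hopfBarrier p w + ε * ycoord w ^ (1 - a)

lemma hopfPerturb_apply (u : Rn (n + 1) → ℝ) (p : Rn (n + 1)) (a c ε : ℝ) (w : Rn (n + 1)) :
    hopfPerturb u p a c ε w = u w + c * hopfBarrier p w + ε * ycoord w ^ (1 - a) :=
  rfl

section HopfPerturb

variable {u : Rn (n + 1) → ℝ} {p z : Rn (n + 1)} {a c ε : ℝ}

lemma contDiffAt_hopfBarrier (hz : z ≠ p) : ContDiffAt ℝ 2 (hopfBarrier p) z :=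
  contDiffAt_rpow_normSq_sub hz (-((n : ℝ) + 1) / 2)

lemma not_isLocalMax_hopfPerturb (ha : a < 2) (hu : ContDiffAt ℝ 2 u z) (hua : aLap a u z = 0)
    (hp : ycoord p = 0) (hy : 0 < ycoord z) (hc : 0 < c) :
    ¬ IsLocalMax (hopfPerturb u p a c ε) z := by
  have hz : z ≠ p := ne_of_ycoord_ne hp hy.ne'
  have hH := contDiffAt_hopfBarrier hz
  have hψ := contDiffAt_ycoord_rpow hy.ne' (1 - a)
  have huH : ContDiffAt ℝ 2 (fun w => u w + c * hopfBarrier p w) z :=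
    hu.add (contDiffAt_const.mul hH)
  have hv : ContDiffAt ℝ 2 (hopfPerturb u p a c ε) z := huH.add (contDiffAt_const.mul hψ)
  have hpos : 0 < aLap a (hopfPerturb u p a c ε) z := by
    unfold hopfPerturb
    rw [aLap_add huH (contDiffAt_const.mul hψ), aLap_add hu (contDiffAt_const.mul hH),
      aLap_const_mul hH, aLap_const_mul hψ, aLap_ycoord_rpow_one_sub hy, hua]
    simpa using mul_pos hc (aLap_hopfBarrier_pos ha hp hy)
  exact fun hmax => (aLap_nonpos_of_isLocalMax hv hmax hy.le).not_gt hpos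

lemma tendsto_rpow_mul_pdy_hopfBarrier (ha : -1 < a) (hp : ycoord p = 0) {x : Rn n}
    (hx : emb x 0 ≠ p) :
    Tendsto (fun y => y ^ a * pdy (hopfBarrier p) (emb x y)) (𝓝[>] 0) (𝓝 0) := by
  set r : ℝ := -((n : ℝ) + 1) / 2
  have hq : ‖emb x 0 - p‖ ^ 2 ≠ 0 := by simpa [sub_eq_zero] using hx
  have hdist : ContinuousAt (fun y : ℝ => (‖emb x y - p‖ ^ 2) ^ (r - 1)) 0 :=
    (((continuous_emb x).sub continuous_const).norm.pow 2).continuousAt.rpow_const (Or.inl hq)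
  have hcont : ContinuousAt (fun y : ℝ => 2 * r * (‖emb x y - p‖ ^ 2) ^ (r - 1) * y ^ (a + 1)) 0 :=
    (continuousAt_const.mul hdist).mul (Real.continuousAt_rpow_const _ _ (Or.inr (by linarith)))
  have hlim := hcont.tendsto.mono_left (nhdsWithin_le_nhds (s := Ioi 0))
  rw [Real.zero_rpow (by linarith), mul_zero] at hlim
  refine hlim.congr' (eventually_nhdsWithin_of_forall fun y (hy : 0 < y) => ?_)
  have hyp : emb x y ≠ p := ne_of_ycoord_ne hp (by simpa using hy.ne')
  unfold hopfBarrier hopfRadial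
  dsimp only
  rw [pdy_rpow_normSq_sub hyp, hp, ycoord_emb, sub_zero, Real.rpow_add_one hy.ne']
  ring

lemma differentiableAt_hopfPerturb (hu : DifferentiableAt ℝ u z) (hp : ycoord p = 0)
    (hy : 0 < ycoord z) : DifferentiableAt ℝ (hopfPerturb u p a c ε) z :=
  (hu.fun_add ((contDiffAt_hopfBarrier (ne_of_ycoord_ne hp hy.ne')).differentiableAt
    two_ne_zero |>.const_mul c)).fun_add
    ((hasFDerivAt_ycoord_rpow hy.ne' _).differentiableAt.const_mul ε)

lemma pdy_hopfPerturb (hu : DifferentiableAt ℝ u z) (hp : ycoord p = 0) (hy : 0 < ycoord z) :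
    pdy (hopfPerturb u p a c ε) z
      = pdy u z + c * pdy (hopfBarrier p) z + ε * ((1 - a) * (ycoord z ^ a)⁻¹) := by
  have hH := (contDiffAt_hopfBarrier (ne_of_ycoord_ne hp hy.ne')).differentiableAt two_ne_zero
  have hψ := (hasFDerivAt_ycoord_rpow hy.ne' (1 - a)).differentiableAt
  unfold hopfPerturb
  rw [pdy_add (hu.fun_add (hH.const_mul c)) (hψ.const_mul ε), pdy_add hu (hH.const_mul c),
    pdy_const_mul hH, pdy_const_mul hψ, pdy_ycoord_rpow hy.ne', show 1 - a - 1 = -a by ring,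
    Real.rpow_neg hy.le]

end HopfPerturb

lemma hasDerivAt_comp_emb {f : Rn (n + 1) → ℝ} {x : Rn n} {t : ℝ}
    (hf : DifferentiableAt ℝ f (emb x t)) :
    HasDerivAt (fun s => f (emb x s)) (pdy f (emb x t)) t :=
  hf.hasFDerivAt.comp_hasDerivAt t (hasDerivAt_emb x t)

lemma isOpen_upperHalf {Ω : Set (Rn n)} (hΩ : IsOpen Ω) :
    IsOpen {z : Rn (n + 1) | xpart z ∈ Ω ∧ 0 < ycoord z} :=
  (hΩ.preimage continuous_xpart).inter (isOpen_lt continuous_const continuous_ycoord)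

def halfAnnulus (p : Rn (n + 1)) (ρ R : ℝ) : Set (Rn (n + 1)) :=
  {z | ρ ≤ ‖z - p‖ ∧ ‖z - p‖ ≤ R ∧ 0 ≤ ycoord z}

lemma isCompact_halfAnnulus (p : Rn (n + 1)) (ρ R : ℝ) : IsCompact (halfAnnulus p ρ R) := by
  have hd : Continuous fun z : Rn (n + 1) => ‖z - p‖ := (continuous_id.sub continuous_const).norm
  refine (isCompact_closedBall p R).of_isClosed_subset ?_ fun z hz => ?_
  · exact (isClosed_le continuous_const hd).inter
      ((isClosed_le hd continuous_const).inter (isClosed_le continuous_const continuous_ycoord))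
  · simpa [dist_eq_norm] using hz.2.1

lemma halfAnnulus_mem_nhds {p z : Rn (n + 1)} {ρ R : ℝ} (hρ : ρ < ‖z - p‖) (hR : ‖z - p‖ < R)
    (hy : 0 < ycoord z) : halfAnnulus p ρ R ∈ 𝓝 z := by
  have hd : Continuous fun z : Rn (n + 1) => ‖z - p‖ := (continuous_id.sub continuous_const).norm
  refine mem_of_superset (((isOpen_lt continuous_const hd).inter (isOpen_lt hd
    continuous_const)).inter (isOpen_lt continuous_const continuous_ycoord) |>.mem_nhds
    ⟨⟨hρ, hR⟩, hy⟩) fun w hw => ⟨hw.1.1.le, hw.1.2.le, hw.2.le⟩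

namespace ExtSol

variable {a lam : ℝ} {Ω : Set (Rn n)} {u : Rn (n + 1) → ℝ}

lemma contDiffAt (hΩ : IsOpen Ω) (hu : ExtSol a lam Ω u) {z : Rn (n + 1)} (hz : xpart z ∈ Ω)
    (hy : 0 < ycoord z) : ContDiffAt ℝ 2 u z :=
  hu.2.1.1.contDiffAt ((isOpen_upperHalf hΩ).mem_nhds ⟨hz, hy⟩)

lemma continuousOn_vertical (hu : ExtSol a lam Ω u) {x : Rn n} (hx : x ∈ Ω) :
    ContinuousOn (fun y => u (emb x y)) (Ici 0) :=
  hu.1.comp (continuous_emb x).continuousOn fun y hy => ⟨by simpa using hx, by simpa using hy⟩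

lemma continuousOn_trace (hu : ExtSol a lam Ω u) : ContinuousOn (fun x => u (emb x 0)) Ω :=
  hu.1.comp continuous_emb_zero.continuousOn fun x hx => ⟨by simpa using hx, by simp⟩

lemma le_trace (hΩ : IsOpen Ω) (hu : ExtSol a lam Ω u)
    (hmono : ∀ x ∈ Ω, ∀ y : ℝ, 0 < y → pdy u (emb x y) ≤ 0) {x : Rn n} (hx : x ∈ Ω) {y : ℝ}
    (hy : 0 ≤ y) : u (emb x y) ≤ u (emb x 0) := by
  refine antitoneOn_of_hasDerivWithinAt_nonpos (f' := fun t => pdy u (emb x t)) (convex_Ici 0)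
    (hu.continuousOn_vertical hx) (fun t ht => ?_) (fun t ht => ?_) self_mem_Ici hy hy
  all_goals rw [interior_Ici] at ht
  · exact (hasDerivAt_comp_emb ((hu.contDiffAt hΩ (by simpa using hx)
      (by simpa using ht)).differentiableAt two_ne_zero)).hasDerivWithinAt
  · exact hmono x hx t ht

lemma tendsto_rpow_mul_pdy (hu : ExtSol a lam Ω u) {x : Rn n} (hx : x ∈ Ω)
    (hu0 : u (emb x 0) ≤ 0) : Tendsto (fun y => y ^ a * pdy u (emb x y)) (𝓝[>] 0) (𝓝 0) := by
  simpa [max_eq_right hu0] using hu.2.2.tendsto_at hx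

variable {c ε : ℝ} {p : Rn (n + 1)}

lemma eventually_hopfPerturb_lt (hΩ : IsOpen Ω) (hu : ExtSol a lam Ω u) (ha : a ∈ Ioo (-1) 1)
    {x : Rn n} (hx : x ∈ Ω) (hu0 : u (emb x 0) ≤ 0) (hp : ycoord p = 0) (hxp : emb x 0 ≠ p)
    (hε : 0 < ε) :
    ∀ᶠ y in 𝓝[>] 0, hopfPerturb u p a c ε (emb x 0) < hopfPerturb u p a c ε (emb x y) := by
  have hdu : ∀ y > 0, DifferentiableAt ℝ u (emb x y) := fun y hy =>
    (hu.contDiffAt hΩ (by simpa using hx) (by simpa using hy)).differentiableAt two_ne_zero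
  have hlim : Tendsto (fun y => y ^ a * pdy (hopfPerturb u p a c ε) (emb x y)) (𝓝[>] 0)
      (𝓝 (ε * (1 - a))) := by
    have := ((hu.tendsto_rpow_mul_pdy hx hu0).add
      ((tendsto_rpow_mul_pdy_hopfBarrier ha.1 hp hxp).const_mul c)).add_const (ε * (1 - a))
    simp only [mul_zero, add_zero, zero_add] at this
    refine this.congr' (eventually_nhdsWithin_of_forall fun y (hy : 0 < y) => ?_)
    dsimp only
    rw [pdy_hopfPerturb (hdu y hy) hp (by simpa using hy), ycoord_emb]
    field_simp [(Real.rpow_pos_of_pos hy a).ne']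
  have hH : ContinuousAt (fun y => hopfBarrier p (emb x y)) 0 :=
    (contDiffAt_hopfBarrier hxp).continuousAt.comp (continuous_emb x).continuousAt
  have hψ : ContinuousAt (fun y => ycoord (emb x y) ^ (1 - a)) 0 := by
    simpa using Real.continuousAt_rpow_const 0 (1 - a) (Or.inr (by linarith [ha.2]))
  refine eventually_lt_of_hasDerivAt_pos (g := fun y => hopfPerturb u p a c ε (emb x y))
    (g' := fun y => pdy (hopfPerturb u p a c ε) (emb x y)) ?_ ?_
  · exact ((hu.continuousOn_vertical hx 0 self_mem_Ici).add
      (continuousWithinAt_const.mul hH.continuousWithinAt)).add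
      (continuousWithinAt_const.mul hψ.continuousWithinAt)
  · filter_upwards [hlim.eventually (eventually_gt_nhds (mul_pos hε (sub_pos.2 ha.2))),
      self_mem_nhdsWithin] with y hpos (hy : 0 < y)
    exact ⟨hasDerivAt_comp_emb (differentiableAt_hopfPerturb (hdu y hy) hp (by simpa using hy)),
      pos_of_mul_pos_right hpos (Real.rpow_pos_of_pos hy a).le⟩

variable {ρ R : ℝ}

lemma norm_sub_eq_of_isMaxOn (hΩ : IsOpen Ω) (hu : ExtSol a lam Ω u) (ha : a ∈ Ioo (-1) 1)
    (hp : ycoord p = 0) (hρ : 0 ≤ ρ) (hc : 0 < c) (hε : 0 < ε)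
    (hK : ∀ z ∈ halfAnnulus p ρ R, xpart z ∈ Ω ∧ u (emb (xpart z) 0) ≤ 0) {zs : Rn (n + 1)}
    (hzs : zs ∈ halfAnnulus p ρ R) (hmax : IsMaxOn (hopfPerturb u p a c ε) (halfAnnulus p ρ R) zs) :
    ‖zs - p‖ = ρ ∨ ‖zs - p‖ = R := by
  by_contra! hne
  have hρzs : ρ < ‖zs - p‖ := lt_of_le_of_ne hzs.1 hne.1.symm
  have hzsR : ‖zs - p‖ < R := lt_of_le_of_ne hzs.2.1 hne.2
  obtain ⟨hxΩ, hu0⟩ := hK zs hzs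
  rcases hzs.2.2.eq_or_lt with hy0 | hy
  · have hzs_eq : emb (xpart zs) 0 = zs := by rw [hy0, emb_xpart_ycoord]
    have hdist : Tendsto (fun y => ‖emb (xpart zs) y - p‖) (𝓝 0) (𝓝 ‖zs - p‖) := by
      simpa [hzs_eq] using ((continuous_emb (xpart zs)).sub continuous_const).norm.tendsto 0
    have hmem : ∀ᶠ y in 𝓝[>] 0, emb (xpart zs) y ∈ halfAnnulus p ρ R := by
      filter_upwards [nhdsWithin_le_nhds (hdist.eventually (Ioo_mem_nhds hρzs hzsR)),
        self_mem_nhdsWithin] with y hy (hy0 : 0 < y)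
      exact ⟨hy.1.le, hy.2.le, by simpa using hy0.le⟩
    have hxp : emb (xpart zs) 0 ≠ p := by
      rw [hzs_eq]; exact sub_ne_zero.1 (norm_pos_iff.1 (hρ.trans_lt hρzs))
    obtain ⟨y, hlt, hy⟩ := ((hu.eventually_hopfPerturb_lt hΩ ha hxΩ hu0 hp hxp hε).and hmem).exists
    rw [hzs_eq] at hlt
    exact (hmax hy).not_gt hlt
  · exact not_isLocalMax_hopfPerturb (by linarith [ha.2]) (hu.contDiffAt hΩ hxΩ hy)
      (hu.2.1.aLap_eq_zero ⟨hxΩ, hy⟩ hy) hp hy hc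
      (hmax.isLocalMax (halfAnnulus_mem_nhds hρzs hzsR hy))

lemma hopfPerturb_le_of_le_on_spheres (hΩ : IsOpen Ω) (hu : ExtSol a lam Ω u)
    (ha : a ∈ Ioo (-1) 1) (hp : ycoord p = 0) (hρ : 0 < ρ) (hc : 0 < c) (hε : 0 < ε)
    (hK : ∀ z ∈ halfAnnulus p ρ R, xpart z ∈ Ω ∧ u (emb (xpart z) 0) ≤ 0) {M : ℝ}
    (hM : ∀ z ∈ halfAnnulus p ρ R, (‖z - p‖ = ρ ∨ ‖z - p‖ = R) → hopfPerturb u p a c ε z ≤ M)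
    {z₀ : Rn (n + 1)} (hz₀ : z₀ ∈ halfAnnulus p ρ R) : hopfPerturb u p a c ε z₀ ≤ M := by
  have hcont : ContinuousOn (hopfPerturb u p a c ε) (halfAnnulus p ρ R) := by
    refine ((hu.1.mono fun z hz => ⟨(hK z hz).1, hz.2.2⟩).add
      (continuousOn_const.mul fun z hz => ?_)).add (continuousOn_const.mul fun z hz => ?_)
    · exact (contDiffAt_hopfBarrier (sub_ne_zero.1 (norm_pos_iff.1
        (hρ.trans_le hz.1)))).continuousAt.continuousWithinAt
    · exact ((Real.continuousAt_rpow_const _ _ (Or.inr (by linarith [ha.2]))).comp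
        continuous_ycoord.continuousAt).continuousWithinAt
  obtain ⟨zs, hzs, hmax⟩ := (isCompact_halfAnnulus p ρ R).exists_isMaxOn ⟨z₀, hz₀⟩ hcont
  exact (hmax hz₀).trans (hM zs hzs (hu.norm_sub_eq_of_isMaxOn hΩ ha hp hρ.le hc hε hK hzs hmax))

lemma add_hopfBarrier_le (hΩ : IsOpen Ω) (hu : ExtSol a lam Ω u) (ha : a ∈ Ioo (-1) 1)
    (hmono : ∀ x ∈ Ω, ∀ y : ℝ, 0 < y → pdy u (emb x y) ≤ 0) {x₁ : Rn n} (hρ : 0 < ρ)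
    (hc : 0 < c) (hball : closedBall x₁ R ⊆ Ω) (hnonpos : ∀ x ∈ closedBall x₁ R, u (emb x 0) ≤ 0)
    (hinner : ∀ x ∈ closedBall x₁ ρ, u (emb x 0) + c * hopfRadial n ρ ≤ c * hopfRadial n R)
    {z : Rn (n + 1)} (hz : z ∈ halfAnnulus (emb x₁ 0) ρ R) :
    u z + c * hopfBarrier (emb x₁ 0) z ≤ c * hopfRadial n R := by
  set p := emb x₁ 0
  have hp : ycoord p = 0 := ycoord_emb x₁ 0
  have hxpart : ∀ w, dist (xpart w) x₁ ≤ ‖w - p‖ := fun w => by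
    simpa [dist_eq_norm, p] using norm_xpart_le (w - p)
  have hK : ∀ w ∈ halfAnnulus p ρ R, xpart w ∈ Ω ∧ u (emb (xpart w) 0) ≤ 0 := fun w hw =>
    ⟨hball ((hxpart w).trans hw.2.1), hnonpos _ ((hxpart w).trans hw.2.1)⟩
  have hsphere : ∀ ε > 0, ∀ w ∈ halfAnnulus p ρ R, (‖w - p‖ = ρ ∨ ‖w - p‖ = R) →
      hopfPerturb u p a c ε w ≤ c * hopfRadial n R + ε * R ^ (1 - a) := by
    intro ε hε w hw hw'
    have hu_le : u w ≤ u (emb (xpart w) 0) := by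
      simpa [emb_xpart_ycoord] using hu.le_trace hΩ hmono (hK w hw).1 hw.2.2
    have hψ : ycoord w ^ (1 - a) ≤ R ^ (1 - a) :=
      Real.rpow_le_rpow hw.2.2 (le_trans (by simpa [hp] using ycoord_le_norm (w - p)) hw.2.1)
        (by linarith [ha.2])
    have huH : u w + c * hopfBarrier p w ≤ c * hopfRadial n R := by
      rcases hw' with h | h <;> simp only [hopfBarrier, h]
      · linarith [hinner (xpart w) ((hxpart w).trans h.le)]
      · linarith [(hK w hw).2]
    rw [hopfPerturb_apply]
    linarith [mul_le_mul_of_nonneg_left hψ hε.le]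
  have hRb : 0 < R ^ (1 - a) := Real.rpow_pos_of_pos (hρ.trans_le (hz.1.trans hz.2.1)) _
  refine le_of_forall_pos_le_add fun δ hδ => ?_
  have hε : 0 < δ / R ^ (1 - a) := div_pos hδ hRb
  have := hu.hopfPerturb_le_of_le_on_spheres hΩ ha hp hρ hc hε hK (hsphere _ hε) hz
  rw [hopfPerturb_apply, div_mul_cancel₀ δ hRb.ne'] at this
  linarith [mul_nonneg hε.le (Real.rpow_nonneg hz.2.2 (1 - a))]

lemma trace_nonneg_of_nonpos_on_ball (hΩ : IsOpen Ω) (hu : ExtSol a lam Ω u)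
    (ha : a ∈ Ioo (-1) 1) (hmono : ∀ x ∈ Ω, ∀ y : ℝ, 0 < y → pdy u (emb x y) ≤ 0)
    {x₀ x₁ : Rn n} (hball : closedBall x₁ R ⊆ Ω)
    (hnonpos : ∀ x ∈ closedBall x₁ R, u (emb x 0) ≤ 0) (hx₀ : u (emb x₀ 0) = 0) (hne : x₀ ≠ x₁)
    (hR : dist x₀ x₁ < R) : 0 ≤ u (emb x₁ 0) := by
  by_contra! hneg
  have hd : 0 < dist x₀ x₁ := dist_pos.2 hne
  obtain ⟨ρ₀, hρ₀, hinner⟩ : ∃ ρ₀ > 0, ∀ x ∈ ball x₁ ρ₀, u (emb x 0) < u (emb x₁ 0) / 2 :=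
    Metric.eventually_nhds_iff_ball.1 ((hu.continuousOn_trace.continuousAt
      (hΩ.mem_nhds (hball (mem_closedBall_self (hd.le.trans hR.le))))).eventually
      (gt_mem_nhds (by linarith)))
  set ρ := min (ρ₀ / 2) (dist x₀ x₁ / 2)
  have hρ : 0 < ρ := lt_min (by linarith) (by linarith)
  have hρd : ρ < dist x₀ x₁ := (min_le_right _ _).trans_lt (by linarith)
  have hρρ₀ : ρ < ρ₀ := (min_le_left _ _).trans_lt (by linarith)
  have hgap : 0 < hopfRadial n ρ - hopfRadial n R :=
    sub_pos.2 (hopfRadial_lt_hopfRadial hρ (hρd.trans hR))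
  -- `c` makes `u + c * hopfBarrier ≤ c * hopfRadial n R` on the inner sphere
  set c := -u (emb x₁ 0) / 2 / (hopfRadial n ρ - hopfRadial n R)
  have hc : 0 < c := div_pos (by linarith) hgap
  have hcρ : c * (hopfRadial n ρ - hopfRadial n R) = -u (emb x₁ 0) / 2 :=
    div_mul_cancel₀ _ hgap.ne'
  have hx₀p : ‖emb x₀ 0 - emb x₁ 0‖ = dist x₀ x₁ := by
    rw [emb_sub_emb, sub_zero, norm_emb_zero, ← dist_eq_norm]
  have hcomp := hu.add_hopfBarrier_le hΩ ha hmono hρ hc hball hnonpos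
    (fun x hx => by linarith [hinner x (mem_ball.2 (hx.trans_lt hρρ₀))])
    (show emb x₀ 0 ∈ halfAnnulus (emb x₁ 0) ρ R from ⟨hx₀p ▸ hρd.le, hx₀p ▸ hR.le, by simp⟩)
  simp only [hx₀, hopfBarrier, hx₀p, zero_add] at hcomp
  exact (mul_lt_mul_of_pos_left (hopfRadial_lt_hopfRadial hd hR) hc).not_ge hcomp

end ExtSol

end HalfSpace

theorem statement5_general (n : ℕ) (a : ℝ) (ha : a ∈ Set.Ioo (-1 : ℝ) 1)
    (lam : ℝ)
    (Ω : Set (Rn n)) (hΩ : IsOpen Ω) (u : Rn (n + 1) → ℝ)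
    (hu : ExtSol a lam Ω u)
    (hmono : ∀ x ∈ Ω, ∀ y : ℝ, 0 < y → pdy u (emb x y) ≤ 0) :
    Ω ∩ frontier {x ∈ Ω | u (emb x 0) < 0} ⊆ Ω ∩ frontier {x ∈ Ω | 0 < u (emb x 0)} := by
  rintro x₀ ⟨hx₀, hfr⟩
  have hS : IsOpen {x ∈ Ω | u (emb x 0) < 0} :=
    hu.continuousOn_trace.isOpen_inter_preimage hΩ isOpen_Iio
  have hP : IsOpen {x ∈ Ω | 0 < u (emb x 0)} :=
    hu.continuousOn_trace.isOpen_inter_preimage hΩ isOpen_Ioi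
  rw [hS.frontier_eq] at hfr
  have hzero : u (emb x₀ 0) = 0 := le_antisymm
    (ContinuousWithinAt.closure_le hfr.1 (hu.continuousOn_trace.continuousAt
      (hΩ.mem_nhds hx₀)).continuousWithinAt continuousWithinAt_const fun x hx => hx.2.le)
    (not_lt.1 fun h => hfr.2 ⟨hx₀, h⟩)
  refine ⟨hx₀, hP.frontier_eq ▸ ⟨?_, fun h => h.2.ne' hzero⟩⟩
  by_contra hncl
  obtain ⟨δ, hδ, hballΩ, hnonpos⟩ := exists_ball_subset_nonpos_of_notMem_closure hΩ hx₀ hncl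
  obtain ⟨x₁, ⟨-, hneg⟩, hx₁⟩ := Metric.mem_closure_iff.1 hfr.1 (δ / 3) (by positivity)
  have hne : x₀ ≠ x₁ := by rintro rfl; linarith
  have hsub : closedBall x₁ (2 * dist x₀ x₁) ⊆ ball x₀ δ := fun x hx => by
    rw [mem_ball, dist_comm]
    linarith [dist_triangle x₀ x₁ x, mem_closedBall'.1 hx]
  exact (hu.trace_nonneg_of_nonpos_on_ball hΩ ha hmono (hsub.trans hballΩ)
    (fun x hx => hnonpos x (hsub hx)) hzero hne (by linarith [dist_pos.2 hne])).not_gt hneg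

/-- Proposition 5.1: if `u` solves the extension form of the fractional plasma
equation on `Ω` and `∂_y u ≤ 0` on `Ω × (0,∞)`, then the boundary, relative to `Ω`, of
`{u(·,0) < 0}` is contained in the boundary, relative to `Ω`, of `{u(·,0) > 0}`. -/
theorem statement5 (n : ℕ) (hn : 1 ≤ n) (a : ℝ) (ha : a ∈ Set.Ioo (-1 : ℝ) 1)
    (lam : ℝ) (hlam : 0 < lam)
    (Ω : Set (Rn n)) (hΩ : IsOpen Ω) (u : Rn (n + 1) → ℝ)
    (hu : ExtSol a lam Ω u)
    (hmono : ∀ x ∈ Ω, ∀ y : ℝ, 0 < y → pdy u (emb x y) ≤ 0) :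
    Ω ∩ frontier {x ∈ Ω | u (emb x 0) < 0} ⊆ Ω ∩ frontier {x ∈ Ω | 0 < u (emb x 0)} :=
  statement5_general n a ha lam Ω hΩ u hu hmono
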